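/- arXiv:math/0211436 — 2 statements merged into one kernel-verified Lean document; each statement's English description precedes it below -/
import Mathlib

section
/- A multi-segment decomposition preserves cutsets: if v is an interior vertex of connected graph G with components C_1, ..., C_k of G − v, and S_i denotes the induced subgraph on C_i ∪ {v}, then every minimal cutset (X, X') of a segment S_i with v ∈ X lifts to a minimal cutset (X ∪ ⋃_{j≠i} C_j, X') of G. -/
/-- A partition `(X, Xᶜ)` of the vertices is a minimal cutset iff both parts are
non-empty and both induced subgraphs are connected. -/
def IsCutset {V : Type*} (G : SimpleGraph V) (X : Set V) : Prop :=
  X.Nonempty ∧ Xᶜ.Nonempty ∧ (G.induce X).Connected ∧ (G.induce Xᶜ).Connected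

/-- Segments preserve cutsets: let `v` be an interior vertex of a finite connected
graph `G` and `C` (the vertex set of) one of the connected components of `G − v`.
If `(X, X')` is a minimal cutset of the segment `S_i = G[C ∪ {v}]` with `v ∈ X`
(i.e. `X ⊆ C ∪ {v}`, both `X` and `X' = (C ∪ {v}) \ X` non-empty with connected
induced subgraphs), then `(X ∪ ⋃_{j ≠ i} C_j, X')` is a minimal cutset of `G`. -/
theorem segment_cutset_lifts {V : Type*} [Fintype V] (G : SimpleGraph V)
    (hG : G.Connected) (v : V)
    (hint : ¬ (G.induce ({v}ᶜ : Set V)).Connected)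
    (Comp : (G.induce ({v}ᶜ : Set V)).ConnectedComponent)
    (C : Set V) (hC : C = Subtype.val '' Comp.supp)
    (X : Set V) (hXsub : X ⊆ C ∪ {v}) (hvX : v ∈ X)
    (hX'ne : ((C ∪ {v}) \ X).Nonempty)
    (hXconn : (G.induce X).Connected)
    (hX'conn : (G.induce ((C ∪ {v}) \ X)).Connected) :
    IsCutset G (X ∪ (C ∪ {v})ᶜ) := by
  set S : Set V := X ∪ (C ∪ {v})ᶜ with hS
  have hXS : X ⊆ S := Set.subset_union_left
  have hvS : v ∈ S := Or.inl hvX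
  -- vertices outside C ∪ {v} reach v within S
  have key : ∀ (n : ℕ) (w : V) (p : G.Walk w v), p.length = n → ∀ hw : w ∈ (C ∪ {v})ᶜ,
      (G.induce S).Reachable ⟨w, Or.inr hw⟩ ⟨v, hvS⟩ := by
    intro n
    induction n with
    | zero =>
      intro w p hlen hw
      have : w = v := p.eq_of_length_eq_zero hlen
      exact absurd (Or.inr this) hw
    | succ n ih =>
      intro w p hlen hw
      cases p with
      | nil => exact absurd (Or.inr rfl) hw
      | @cons _ w' _ h q =>
        by_cases hw'v : w' = v
        · subst hw'v
          exact SimpleGraph.Adj.reachable (by exact h)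
        · have hw'C : w' ∉ C := by
            intro hw'C
            apply hw
            left
            have hwv : w ≠ v := fun hwv => hw (Or.inr hwv)
            obtain ⟨x, hx, hxval⟩ := hC ▸ hw'C
            have hadj : (G.induce ({v}ᶜ : Set V)).Adj ⟨w, hwv⟩ ⟨w', hw'v⟩ := by
              exact h
            have hmk : (G.induce ({v}ᶜ : Set V)).connectedComponentMk ⟨w', hw'v⟩ = Comp := by
              have : (⟨w', hw'v⟩ : ({v}ᶜ : Set V)) = x := Subtype.ext hxval.symm
              rw [this]; exact hx
            have hmkw : (G.induce ({v}ᶜ : Set V)).connectedComponentMk ⟨w, hwv⟩ = Comp := by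
              rw [← hmk]
              exact SimpleGraph.ConnectedComponent.sound hadj.reachable
            rw [hC]
            exact ⟨⟨w, hwv⟩, hmkw, rfl⟩
          have hw' : w' ∈ (C ∪ {v})ᶜ := by
            intro hmem
            rcases hmem with h1 | h1
            · exact hw'C h1
            · exact hw'v h1
          have hedge : (G.induce S).Adj ⟨w, Or.inr hw⟩ ⟨w', Or.inr hw'⟩ := by exact h
          have hqlen : q.length = n := by
            simpa using hlen
          exact hedge.reachable.trans (ih w' q hqlen hw')
  have toV : ∀ a : S, (G.induce S).Reachable a ⟨v, hvS⟩ := by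
    rintro ⟨a, ha⟩
    by_cases haX : a ∈ X
    · have hreach := hXconn.preconnected ⟨a, haX⟩ ⟨v, hvX⟩
      let f : G.induce X →g G.induce S := ⟨fun x => ⟨x.1, hXS x.2⟩, fun {x y} h => h⟩
      exact hreach.map f
    · have ha' : a ∈ (C ∪ {v})ᶜ := ha.resolve_left haX
      obtain ⟨p⟩ := hG.preconnected a v
      exact key p.length a p rfl ha'
  have hScompl : Sᶜ = (C ∪ {v}) \ X := by
    rw [hS]
    ext x
    simp only [Set.mem_compl_iff, Set.mem_union, Set.mem_diff]
    tauto
  refine ⟨⟨v, hvS⟩, ?_, ?_, ?_⟩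
  · rw [hScompl]; exact hX'ne
  · haveI : Nonempty S := ⟨⟨v, hvS⟩⟩
    exact ⟨fun a b => (toV a).trans (toV b).symm⟩
  · rw [hScompl]; exact hX'conn
end

section
/- Every minimal cutset of a connected graph G with interior vertex v arises from exactly one segment: if (Y, Y') is a minimal cutset of G with v ∈ Y, then Y' ⊆ C_i for a unique i, and (Y ∩ (C_i ∪ {v}), Y') is a minimal cutset of the segment S_i = G[C_i ∪ {v}]. -/
/-- Every minimal cutset of a connected graph `G` with interior vertex `v` arises
from exactly one segment: if `(Y, Yᶜ)` is a minimal cutset of `G` with `v ∈ Y`, then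
`Yᶜ ⊆ C_i` for a unique cluster `C_i` (component of `G − v`), and
`(Y ∩ (C_i ∪ {v}), Yᶜ)` is a minimal cutset of the segment `S_i = G[C_i ∪ {v}]`:
the two parts are non-empty, partition `C_i ∪ {v}`, and induce connected subgraphs. -/
theorem cutset_from_unique_segment {V : Type*} [Fintype V] (G : SimpleGraph V)
    (hG : G.Connected) (v : V)
    (hint : ¬ (G.induce ({v}ᶜ : Set V)).Connected)
    (Y : Set V) (hv : v ∈ Y) (hYne : Y.Nonempty) (hYcne : Yᶜ.Nonempty)
    (hYconn : (G.induce Y).Connected) (hYcconn : (G.induce Yᶜ).Connected) :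
    ∃! C : (G.induce ({v}ᶜ : Set V)).ConnectedComponent,
      Yᶜ ⊆ Subtype.val '' C.supp ∧
      (Y ∩ (Subtype.val '' C.supp ∪ {v})).Nonempty ∧
      (Y ∩ (Subtype.val '' C.supp ∪ {v})) ∪ Yᶜ = Subtype.val '' C.supp ∪ {v} ∧
      (G.induce (Y ∩ (Subtype.val '' C.supp ∪ {v}))).Connected ∧
      (G.induce Yᶜ).Connected := by
  classical
  obtain ⟨y0, hy0⟩ := hYcne
  have hy0v : y0 ≠ v := fun h => hy0 (h ▸ hv)
  have hsubc : (Yᶜ : Set V) ⊆ ({v}ᶜ : Set V) := by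
    intro x hx hxv
    exact hx (Set.mem_singleton_iff.mp hxv ▸ hv)
  let f : G.induce Yᶜ →g G.induce ({v}ᶜ : Set V) :=
    ⟨fun x => ⟨x.1, hsubc x.2⟩, fun h => h⟩
  set C := (G.induce ({v}ᶜ : Set V)).connectedComponentMk ⟨y0, hsubc hy0⟩ with hC
  set A : Set V := Subtype.val '' C.supp with hA
  have hmemA : ∀ y ∈ Yᶜ, y ∈ A := by
    intro y hy
    have hr : (G.induce Yᶜ).Reachable ⟨y0, hy0⟩ ⟨y, hy⟩ := hYcconn ⟨y0, hy0⟩ ⟨y, hy⟩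
    have hr' : (G.induce ({v}ᶜ : Set V)).Reachable ⟨y0, hsubc hy0⟩ ⟨y, hsubc hy⟩ := hr.map f
    exact ⟨⟨y, hsubc hy⟩, by
      rw [SimpleGraph.ConnectedComponent.mem_supp_iff, hC]
      exact SimpleGraph.ConnectedComponent.sound hr'.symm, rfl⟩
  have hAv : v ∉ A := by
    rintro ⟨a, _, ha⟩
    exact a.2 ha
  -- neighbor closure of A away from v
  have hclose : ∀ a b : V, a ∈ A → G.Adj a b → b ≠ v → b ∈ A := by
    rintro a b ⟨a', ha', rfl⟩ hadj hbv
    have hb : b ∈ ({v}ᶜ : Set V) := hbv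
    refine ⟨⟨b, hb⟩, ?_, rfl⟩
    rw [SimpleGraph.ConnectedComponent.mem_supp_iff]
    have hadj' : (G.induce ({v}ᶜ : Set V)).Adj a' ⟨b, hb⟩ := hadj
    rw [SimpleGraph.ConnectedComponent.mem_supp_iff] at ha'
    rw [← ha']
    exact SimpleGraph.ConnectedComponent.sound hadj'.symm.reachable
  set T : Set V := Y ∩ (A ∪ {v}) with hT
  have hvT : v ∈ T := ⟨hv, Or.inr rfl⟩
  -- main helper: walks in induce Y ending at v, starting in A ∪ {v}, stay in T
  have helper : ∀ (x z : Y) (p : (G.induce Y).Walk x z), (z : V) = v →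
      ∀ (hx : (x : V) ∈ A ∪ {v}),
      (G.induce T).Reachable ⟨x, ⟨x.2, hx⟩⟩ ⟨v, hvT⟩ := by
    intro x z p
    induction p with
    | @nil a =>
      intro hz hx
      have : (⟨(a : V), ⟨a.2, hx⟩⟩ : T) = ⟨v, hvT⟩ := Subtype.ext hz
      rw [this]
    | @cons a b c h q ih =>
      intro hz hx
      have hGadj : G.Adj (a : V) (b : V) := h
      rcases hx with hxA | hxv
      · by_cases hyv : (b : V) = v
        · have hadjT : (G.induce T).Adj ⟨a, ⟨a.2, Or.inl hxA⟩⟩ ⟨v, hvT⟩ := by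
            show G.Adj (a : V) v
            exact hyv ▸ hGadj
          exact hadjT.reachable
        · have hyA : (b : V) ∈ A := hclose a b hxA hGadj hyv
          have hadjT : (G.induce T).Adj ⟨a, ⟨a.2, Or.inl hxA⟩⟩ ⟨b, ⟨b.2, Or.inl hyA⟩⟩ := hGadj
          exact hadjT.reachable.trans (ih hz (Or.inl hyA))
      · have : (⟨(a : V), ⟨a.2, Or.inr hxv⟩⟩ : T) = ⟨v, hvT⟩ := Subtype.ext hxv
        rw [this]
  have hTconn : (G.induce T).Connected := by
    rw [SimpleGraph.connected_iff]
    refine ⟨?_, ⟨⟨v, hvT⟩⟩⟩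
    intro a b
    have key : ∀ a : T, (G.induce T).Reachable a ⟨v, hvT⟩ := by
      rintro ⟨a, haY, haU⟩
      obtain ⟨p⟩ := hYconn ⟨a, haY⟩ ⟨v, hv⟩
      exact helper ⟨a, haY⟩ ⟨v, hv⟩ p rfl haU
    exact (key a).trans (key b).symm
  refine ⟨C, ⟨fun y hy => hmemA y hy, ⟨v, hv, Or.inr rfl⟩, ?_, hTconn, hYcconn⟩, ?_⟩
  · apply Set.eq_of_subset_of_subset
    · rintro x (⟨_, hx⟩ | hx)
      · exact hx
      · exact Or.inl (hmemA x hx)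
    · intro x hx
      by_cases hxY : x ∈ Y
      · exact Or.inl ⟨hxY, hx⟩
      · exact Or.inr hxY
  · rintro C' ⟨hsub', -⟩
    obtain ⟨a, ha, hav⟩ := hsub' hy0
    have : a = ⟨y0, hsubc hy0⟩ := Subtype.ext hav
    rw [SimpleGraph.ConnectedComponent.mem_supp_iff, this] at ha
    rw [← ha, hC]
end
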